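/- arXiv:1707.02102 — 11 statements merged into one kernel-verified Lean document; each statement's English description precedes it below -/
import Mathlib

section
/- An interval matrix 𝐀 = [A_c − Δ, A_c + Δ] (with Δ ≥ 0 entrywise) is strongly singular (every real matrix in 𝐀 is singular) if and only if every vertex matrix of 𝐀 (every matrix whose (i,j)-entry equals either the lower endpoint (A_c − Δ)_{ij} or the upper endpoint (A_c + Δ)_{ij} for all i, j) is singular. -/
/-- Auxiliary: determinant vanishes on convex combination of two rows if it vanishes
on each. -/
lemma det_comb_row {n : ℕ} (A : Matrix (Fin n) (Fin n) ℝ) (i : Fin n)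
    (r1 r2 : Fin n → ℝ) (c : ℝ)
    (h1 : (A.updateRow i r1).det = 0) (h2 : (A.updateRow i r2).det = 0) :
    (A.updateRow i (c • r1 + (1 - c) • r2)).det = 0 := by
  rw [Matrix.det_updateRow_add, Matrix.det_updateRow_smul, Matrix.det_updateRow_smul,
    h1, h2]
  simp

lemma key_induction {n : ℕ} (Ac Δ : Matrix (Fin n) (Fin n) ℝ)
    (hΔ : ∀ i j, 0 ≤ Δ i j)
    (hv : ∀ A : Matrix (Fin n) (Fin n) ℝ,
        (∀ i j, A i j = Ac i j - Δ i j ∨ A i j = Ac i j + Δ i j) → A.det = 0)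
    (s : Finset (Fin n × Fin n)) :
    ∀ A : Matrix (Fin n) (Fin n) ℝ,
      (∀ i j, Ac i j - Δ i j ≤ A i j ∧ A i j ≤ Ac i j + Δ i j) →
      (∀ p : Fin n × Fin n, p ∉ s →
        A p.1 p.2 = Ac p.1 p.2 - Δ p.1 p.2 ∨ A p.1 p.2 = Ac p.1 p.2 + Δ p.1 p.2) →
      A.det = 0 := by
  induction s using Finset.induction with
  | empty =>
      intro A _ hfree
      exact hv A (fun i j => hfree (i, j) (Finset.notMem_empty _))
  | @insert p s hp ih =>
      intro A hbound hfree
      obtain ⟨i, j⟩ := p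
      set l := Ac i j - Δ i j with hl
      set u := Ac i j + Δ i j with hu
      have hlu : l ≤ u := by
        simp only [hl, hu]
        nlinarith [hΔ i j]
      have hbij := hbound i j
      set t := A i j with ht
      set c : ℝ := if u = l then 0 else (t - l) / (u - l) with hc
      have hct : c * u + (1 - c) * l = t := by
        by_cases h : u = l
        · simp [hc, h]
          have h1 : l ≤ t := hbij.1
          have h2 : t ≤ u := hbij.2
          linarith [h ▸ h2]
        · have hne : u - l ≠ 0 := sub_ne_zero.mpr h
          simp only [hc, if_neg h]
          field_simp
          ring
      set rhi : Fin n → ℝ := Function.update (A i) j u with hrhi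
      set rlo : Fin n → ℝ := Function.update (A i) j l with hrlo
      -- A equals update with the convex combination row
      have hrow : A i = c • rhi + (1 - c) • rlo := by
        funext j'
        by_cases hj : j' = j
        · subst hj
          simp [hrhi, hrlo]
          rw [← ht]
          linarith [hct]
        · simp [hrhi, hrlo, Function.update_of_ne hj]
          ring
      have hA : A = A.updateRow i (c • rhi + (1 - c) • rlo) := by
        rw [← hrow, Matrix.updateRow_eq_self]
      rw [hA]
      apply det_comb_row
      · -- A_hi
        apply ih (A.updateRow i rhi)
        · intro i' j'
          by_cases hi : i' = i
          · subst hi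
            by_cases hj : j' = j
            · subst hj
              simp only [Matrix.updateRow_self, hrhi, Function.update_self]
              exact ⟨hlu, le_refl u⟩
            · simp only [Matrix.updateRow_self, hrhi, Function.update_of_ne hj]
              exact hbound i' j'
          · simp only [Matrix.updateRow_ne hi]
            exact hbound i' j'
        · intro q hq
          by_cases hqp : q = (i, j)
          · subst hqp
            right
            simp [hrhi, hu]
          · have hq' : q ∉ insert (i, j) s := by
              simp only [Finset.mem_insert, not_or]
              exact ⟨hqp, hq⟩
            have := hfree q hq'
            have heq : (A.updateRow i rhi) q.1 q.2 = A q.1 q.2 := by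
              by_cases hi : q.1 = i
              · have hj : q.2 ≠ j := by
                  intro hj
                  exact hqp (Prod.ext hi hj)
                rw [hi, Matrix.updateRow_self, hrhi, Function.update_of_ne hj]
              · rw [Matrix.updateRow_ne hi]
            rw [heq]
            exact this
      · -- A_lo
        apply ih (A.updateRow i rlo)
        · intro i' j'
          by_cases hi : i' = i
          · subst hi
            by_cases hj : j' = j
            · subst hj
              simp only [Matrix.updateRow_self, hrlo, Function.update_self]
              exact ⟨le_refl l, hlu⟩
            · simp only [Matrix.updateRow_self, hrlo, Function.update_of_ne hj]
              exact hbound i' j'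
          · simp only [Matrix.updateRow_ne hi]
            exact hbound i' j'
        · intro q hq
          by_cases hqp : q = (i, j)
          · subst hqp
            left
            simp [hrlo, hl]
          · have hq' : q ∉ insert (i, j) s := by
              simp only [Finset.mem_insert, not_or]
              exact ⟨hqp, hq⟩
            have := hfree q hq'
            have heq : (A.updateRow i rlo) q.1 q.2 = A q.1 q.2 := by
              by_cases hi : q.1 = i
              · have hj : q.2 ≠ j := by
                  intro hj
                  exact hqp (Prod.ext hi hj)
                rw [hi, Matrix.updateRow_self, hrlo, Function.update_of_ne hj]
              · rw [Matrix.updateRow_ne hi]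
            rw [heq]
            exact this

/-- An interval matrix `[Ac - Δ, Ac + Δ]` (with `Δ ≥ 0` entrywise) is strongly
singular iff every vertex matrix is singular. -/
theorem strongly_singular_iff_vertex {n : ℕ} (Ac Δ : Matrix (Fin n) (Fin n) ℝ)
    (hΔ : ∀ i j, 0 ≤ Δ i j) :
    (∀ A : Matrix (Fin n) (Fin n) ℝ,
        (∀ i j, Ac i j - Δ i j ≤ A i j ∧ A i j ≤ Ac i j + Δ i j) → A.det = 0) ↔
    (∀ A : Matrix (Fin n) (Fin n) ℝ,
        (∀ i j, A i j = Ac i j - Δ i j ∨ A i j = Ac i j + Δ i j) → A.det = 0) := by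
  constructor
  · intro h A hA
    apply h
    intro i j
    rcases hA i j with h' | h' <;> rw [h'] <;> constructor <;> nlinarith [hΔ i j]
  · intro h A hA
    exact key_induction Ac Δ hΔ h Finset.univ A hA
      (fun p hp => absurd (Finset.mem_univ p) hp)
end

section
/- If the n×n interval matrix 𝐀 = [A_c − Δ, A_c + Δ] is strongly singular, then the interval matrix [−Δ, Δ] is also strongly singular; in particular, the radius matrix Δ is singular. -/
/-!
If `-Δ ≤ A ≤ Δ`, every matrix whose `i`-th row is `Ac i + A i` or `Ac i - A i` lies in
`[Ac - Δ, Ac + Δ]` and is therefore singular. Each row of `A` is a linear combination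
`½ (Ac i + A i) - ½ (Ac i - A i)` of these two rows, so by multilinearity of the determinant in
the rows, `det A` is a linear combination of determinants that all vanish.
-/

open Function Submodule

theorem MultilinearMap.map_eq_zero_of_forall_mem_span {R ι N : Type*} {M : ι → Type*}
    [CommSemiring R] [∀ i, AddCommMonoid (M i)] [AddCommMonoid N] [∀ i, Module R (M i)]
    [Module R N] [Fintype ι] [DecidableEq ι] (f : MultilinearMap R M N) (s : ∀ i, Set (M i))
    (hf : ∀ v : ∀ i, M i, (∀ i, v i ∈ s i) → f v = 0) (v : ∀ i, M i)
    (hv : ∀ i, v i ∈ span R (s i)) : f v = 0 := by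
  suffices key : ∀ S : Finset ι, ∀ v : ∀ i, M i,
      (∀ i ∈ S, v i ∈ span R (s i)) → (∀ i ∉ S, v i ∈ s i) → f v = 0 from
    key Finset.univ v (fun i _ => hv i) (fun i hi => absurd (Finset.mem_univ i) hi)
  intro S
  induction S using Finset.induction_on with
  | empty => exact fun v _ hs => hf v fun i => hs i (Finset.notMem_empty i)
  | insert a S haS ih =>
    intro v hspan hs
    have hker : span R (s a) ≤ LinearMap.ker (f.toLinearMap v a) := by
      refine span_le.mpr fun x hx => ?_
      refine ih (update v a x) (fun i hi => ?_) (fun i hi => ?_)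
      · rw [update_of_ne (ne_of_mem_of_not_mem hi haS)]
        exact hspan i (Finset.mem_insert_of_mem hi)
      · rcases eq_or_ne i a with rfl | hia
        · simpa using hx
        · rw [update_of_ne hia]
          exact hs i (by simp [hia, hi])
    simpa using hker (hspan a (Finset.mem_insert_self a S))

theorem Matrix.det_eq_zero_of_forall_rows_add_or_sub {n R : Type*} [Fintype n] [DecidableEq n]
    [CommRing R] [Invertible (2 : R)] (Ac A : Matrix n n R)
    (h : ∀ B : Matrix n n R, (∀ i, B i = Ac i + A i ∨ B i = Ac i - A i) → B.det = 0) :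
    A.det = 0 := by
  refine (detRowAlternating (n := n) (R := R)).toMultilinearMap.map_eq_zero_of_forall_mem_span
    (fun i => {Ac i + A i, Ac i - A i}) h A fun i => ?_
  have hrow : A i = ⅟(2 : R) • (Ac i + A i) - ⅟(2 : R) • (Ac i - A i) := by
    rw [← smul_sub, add_sub_sub_cancel, ← two_smul R (A i), smul_smul, invOf_mul_self, one_smul]
  have hmem : ⅟(2 : R) • (Ac i + A i) - ⅟(2 : R) • (Ac i - A i) ∈
      span R {Ac i + A i, Ac i - A i} :=
    sub_mem (smul_mem _ _ (subset_span (Set.mem_insert _ _)))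
      (smul_mem _ _ (subset_span (Set.mem_insert_of_mem _ rfl)))
  rwa [← hrow] at hmem

/-- If `[Ac - Δ, Ac + Δ]` is strongly singular, then `[-Δ, Δ]` is strongly singular;
in particular `Δ` is singular. -/
theorem strongly_singular_radius {n : ℕ} (Ac Δ : Matrix (Fin n) (Fin n) ℝ)
    (hΔ : ∀ i j, 0 ≤ Δ i j)
    (h : ∀ A : Matrix (Fin n) (Fin n) ℝ,
        (∀ i j, Ac i j - Δ i j ≤ A i j ∧ A i j ≤ Ac i j + Δ i j) → A.det = 0) :
    (∀ A : Matrix (Fin n) (Fin n) ℝ,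
        (∀ i j, -(Δ i j) ≤ A i j ∧ A i j ≤ Δ i j) → A.det = 0) ∧ Δ.det = 0 := by
  have radius_singular : ∀ A : Matrix (Fin n) (Fin n) ℝ,
      (∀ i j, -(Δ i j) ≤ A i j ∧ A i j ≤ Δ i j) → A.det = 0 := by
    intro A hA
    refine Matrix.det_eq_zero_of_forall_rows_add_or_sub Ac A fun B hB => h B fun i j => ?_
    have hAij := hA i j
    rcases hB i with hBi | hBi <;> rw [hBi] <;> simp only [Pi.add_apply, Pi.sub_apply] <;>
      constructor <;> linarith
  exact ⟨radius_singular, radius_singular Δ fun i j => ⟨by linarith [hΔ i j], le_rfl⟩⟩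
end

section
/- The 2×2 interval matrix 𝐀 with 𝐀^∀ = 0 and 𝐀^∃ having first column zero and second column entries both equal to [−1, 1] is not AE regular, but the interval system 𝐀x = 𝐛 is AE solvable for every 𝐛 ∈ 𝕀ℝ² (so AE solvability for all right-hand sides does not imply AE regularity). -/
/-- For `𝐀^∀ = 0` and `𝐀^∃ = ((0,[-1,1]),(0,[-1,1]))`, the matrix is not AE regular
but `𝐀x = 𝐛` is AE solvable for every right-hand side `𝐛 = 𝐛^∀ + 𝐛^∃`. -/
theorem aeSolvable_not_aeRegular :
    (¬ ∃ Ae : Matrix (Fin 2) (Fin 2) ℝ,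
        (∀ i j, (!![0,-1;0,-1] : Matrix (Fin 2) (Fin 2) ℝ) i j ≤ Ae i j ∧
                 Ae i j ≤ (!![0,1;0,1] : Matrix (Fin 2) (Fin 2) ℝ) i j) ∧ Ae.det ≠ 0) ∧
    (∀ bLf bUf bLe bUe : Fin 2 → ℝ, (∀ i, bLe i ≤ bUe i) →
      ∀ bf : Fin 2 → ℝ, (∀ i, bLf i ≤ bf i ∧ bf i ≤ bUf i) →
      ∃ Ae : Matrix (Fin 2) (Fin 2) ℝ,
        (∀ i j, (!![0,-1;0,-1] : Matrix (Fin 2) (Fin 2) ℝ) i j ≤ Ae i j ∧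
                 Ae i j ≤ (!![0,1;0,1] : Matrix (Fin 2) (Fin 2) ℝ) i j) ∧
      ∃ be : Fin 2 → ℝ, (∀ i, bLe i ≤ be i ∧ be i ≤ bUe i) ∧
      ∃ x : Fin 2 → ℝ, Ae.mulVec x = bf + be) := by
  constructor
  · rintro ⟨Ae, h, hdet⟩
    have h00 : Ae 0 0 = 0 := le_antisymm (by simpa using (h 0 0).2) (by simpa using (h 0 0).1)
    have h10 : Ae 1 0 = 0 := le_antisymm (by simpa using (h 1 0).2) (by simpa using (h 1 0).1)
    exact hdet (by rw [Matrix.det_fin_two, h00, h10]; ring)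
  · intro bLf bUf bLe bUe hbe bf hbf
    set c : Fin 2 → ℝ := bf + bLe with hc
    set s : ℝ := max 1 (max |c 0| |c 1|) with hs
    have hs1 : (1:ℝ) ≤ s := le_max_left _ _
    have hspos : (0:ℝ) < s := lt_of_lt_of_le one_pos hs1
    have habs : ∀ i : Fin 2, |c i| ≤ s := by
      intro i
      fin_cases i
      · exact le_trans (le_max_left _ _) (le_max_right _ _)
      · exact le_trans (le_max_right _ _) (le_max_right _ _)
    have hdiv : ∀ i : Fin 2, -1 ≤ c i / s ∧ c i / s ≤ 1 := by
      intro i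
      rw [div_le_one hspos, neg_le, ← neg_div, div_le_one hspos]
      constructor
      · exact le_trans (neg_le_abs _) (by simpa [abs_neg] using habs i)
      · exact le_trans (le_abs_self _) (habs i)
    refine ⟨!![0, c 0 / s; 0, c 1 / s], ?_, bLe, fun i => ⟨le_refl _, hbe i⟩, ![0, s], ?_⟩
    · intro i j
      fin_cases i <;> fin_cases j <;>
        simp [(hdiv 0).1, (hdiv 0).2, (hdiv 1).1, (hdiv 1).2]
    · funext i
      fin_cases i <;>
        simp [Matrix.mulVec, dotProduct, hc, div_mul_cancel₀ _ (ne_of_gt hspos)]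
end

section
/- The interval matrix 𝐀 = 𝐀^∀ + 𝐀^∃ (square, size n) is NOT AE regular if and only if there exists A^∀ ∈ 𝐀^∀ such that for every vertex matrix A^∃_v of 𝐀^∃ there exists a vector x_v ∈ ℝⁿ with (A^∀ + A^∃_v)x_v = 0 and ‖x_v‖ ≠ 0 (normalizable so that some linear functional in [−e,e]ᵀ gives value 1). -/
/-!
The determinant is affine in each single entry, so if it vanishes at both endpoints of an entry's
interval it vanishes on the whole interval. Freeing the entries one at a time shows that a
determinant vanishing at all vertex matrices of an interval matrix vanishes on all of it. Hence
`A^∀ + 𝐀^∃` is strongly singular as soon as every `A^∀ + A^∃_v` has a nontrivial kernel.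
-/

open Matrix

variable {m R : Type*} [Fintype m] [DecidableEq m]

theorem Matrix.det_updateRow_update [CommRing R] (B : Matrix m m R) (i j : m) (v : R) :
    (B.updateRow i (Function.update (B i) j v)).det =
      (B.updateRow i (Function.update (B i) j 0)).det + v * (B.updateRow i (Pi.single j 1)).det := by
  have hrow : Function.update (B i) j v = Function.update (B i) j 0 + v • Pi.single j 1 := by
    ext k
    by_cases hk : k = j <;> simp [hk]
  rw [hrow, det_updateRow_add, det_updateRow_smul]

theorem add_mul_eq_zero_of_le_of_le [CommRing R] [LinearOrder R] [IsStrictOrderedRing R]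
    {α β a b c : R} (ha : α + a * β = 0) (hb : α + b * β = 0) (hac : a ≤ c) (hcb : c ≤ b) :
    α + c * β = 0 := by
  rcases (hac.trans hcb).eq_or_lt with hab | hab
  · rwa [le_antisymm hac (hab ▸ hcb)] at ha
  · have hdiff : (b - a) * β = 0 := by linear_combination hb - ha
    have hβ : β = 0 := (mul_eq_zero.1 hdiff).resolve_left (sub_ne_zero.2 hab.ne')
    simpa [hβ] using ha

section Vertex

variable [CommRing R] [LinearOrder R] [IsStrictOrderedRing R] (L U : Matrix m m R)

theorem det_eq_zero_of_forall_vertex_of_free_entries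
    (hvert : ∀ B : Matrix m m R, (∀ i j, B i j = L i j ∨ B i j = U i j) → B.det = 0)
    (S : Finset (m × m)) : ∀ B : Matrix m m R,
      (∀ p ∈ S, L p.1 p.2 ≤ B p.1 p.2 ∧ B p.1 p.2 ≤ U p.1 p.2) →
      (∀ p ∉ S, B p.1 p.2 = L p.1 p.2 ∨ B p.1 p.2 = U p.1 p.2) → B.det = 0 := by
  induction S using Finset.induction_on with
  | empty => exact fun B _ hB => hvert B fun i j => hB (i, j) (Finset.notMem_empty _)
  | @insert p S hp ih =>
    intro B hbox hrest
    set upd : R → Matrix m m R := fun v => B.updateRow p.1 (Function.update (B p.1) p.2 v)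
    have upd_apply : ∀ v (q : m × m), upd v q.1 q.2 = if q = p then v else B q.1 q.2 := by
      intro v q
      by_cases h1 : q.1 = p.1 <;> by_cases h2 : q.2 = p.2 <;>
        simp [upd, updateRow_apply, Prod.ext_iff, h1, h2]
    have hupd : ∀ v, v = L p.1 p.2 ∨ v = U p.1 p.2 → (upd v).det = 0 := by
      intro v hv
      refine ih (upd v) (fun q hq => ?_) (fun q hq => ?_)
      · rw [upd_apply, if_neg (ne_of_mem_of_not_mem hq hp)]
        exact hbox q (Finset.mem_insert_of_mem hq)
      · by_cases hqp : q = p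
        · subst hqp
          simpa [upd_apply] using hv
        · rw [upd_apply, if_neg hqp]
          exact hrest q (by simp [hq, hqp])
    have hB : B = upd (B p.1 p.2) := by simp [upd]
    rw [hB, det_updateRow_update]
    have hp' := hbox p (Finset.mem_insert_self p S)
    refine add_mul_eq_zero_of_le_of_le ?_ ?_ hp'.1 hp'.2 <;>
      rw [← det_updateRow_update] <;> exact hupd _ (by simp)

theorem det_eq_zero_of_forall_vertex
    (hvert : ∀ B : Matrix m m R, (∀ i j, B i j = L i j ∨ B i j = U i j) → B.det = 0)
    (B : Matrix m m R) (hB : ∀ i j, L i j ≤ B i j ∧ B i j ≤ U i j) : B.det = 0 :=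
  det_eq_zero_of_forall_vertex_of_free_entries L U hvert Finset.univ B
    (fun p _ => hB p.1 p.2) (fun p hp => absurd (Finset.mem_univ p) hp)

theorem det_add_eq_zero_of_forall_vertex (A : Matrix m m R)
    (hvert : ∀ E : Matrix m m R, (∀ i j, E i j = L i j ∨ E i j = U i j) → (A + E).det = 0)
    (E : Matrix m m R) (hE : ∀ i j, L i j ≤ E i j ∧ E i j ≤ U i j) : (A + E).det = 0 := by
  refine det_eq_zero_of_forall_vertex (A + L) (A + U) (fun B hB => ?_) (A + E) (by simpa using hE)
  simpa using hvert (B - A) fun i j => by simpa [sub_eq_iff_eq_add'] using hB i j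

end Vertex

theorem not_aeRegular_iff_general {n : ℕ} (LA UA LE UE : Matrix (Fin n) (Fin n) ℝ)
    (hE : ∀ i j, LE i j ≤ UE i j) :
    (¬ ∀ Af : Matrix (Fin n) (Fin n) ℝ,
        (∀ i j, LA i j ≤ Af i j ∧ Af i j ≤ UA i j) →
        ∃ Ae : Matrix (Fin n) (Fin n) ℝ,
          (∀ i j, LE i j ≤ Ae i j ∧ Ae i j ≤ UE i j) ∧ (Af + Ae).det ≠ 0) ↔
    (∃ Af : Matrix (Fin n) (Fin n) ℝ,
        (∀ i j, LA i j ≤ Af i j ∧ Af i j ≤ UA i j) ∧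
        ∀ Ae : Matrix (Fin n) (Fin n) ℝ,
          (∀ i j, Ae i j = LE i j ∨ Ae i j = UE i j) →
          ∃ x : Fin n → ℝ, x ≠ 0 ∧ (Af + Ae).mulVec x = 0) := by
  have vertex_mem_box : ∀ Ae : Matrix (Fin n) (Fin n) ℝ,
      (∀ i j, Ae i j = LE i j ∨ Ae i j = UE i j) → ∀ i j, LE i j ≤ Ae i j ∧ Ae i j ≤ UE i j := by
    intro Ae hAe i j
    rcases hAe i j with h | h <;> rw [h]
    exacts [⟨le_rfl, hE i j⟩, ⟨hE i j, le_rfl⟩]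
  simp only [exists_mulVec_eq_zero_iff]
  push Not
  exact exists_congr fun Af => and_congr_right fun _ =>
    ⟨fun hsing Ae hAe => hsing Ae (vertex_mem_box Ae hAe), det_add_eq_zero_of_forall_vertex LE UE Af⟩

/-- `𝐀 = 𝐀^∀ + 𝐀^∃` is not AE regular iff there is `A^∀ ∈ 𝐀^∀` such that every
vertex matrix `A^∃_v` of `𝐀^∃` admits a nonzero vector `x_v` with `(A^∀ + A^∃_v) x_v = 0`. -/
theorem not_aeRegular_iff {n : ℕ} (LA UA LE UE : Matrix (Fin n) (Fin n) ℝ)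
    (hA : ∀ i j, LA i j ≤ UA i j) (hE : ∀ i j, LE i j ≤ UE i j) :
    (¬ ∀ Af : Matrix (Fin n) (Fin n) ℝ,
        (∀ i j, LA i j ≤ Af i j ∧ Af i j ≤ UA i j) →
        ∃ Ae : Matrix (Fin n) (Fin n) ℝ,
          (∀ i j, LE i j ≤ Ae i j ∧ Ae i j ≤ UE i j) ∧ (Af + Ae).det ≠ 0) ↔
    (∃ Af : Matrix (Fin n) (Fin n) ℝ,
        (∀ i j, LA i j ≤ Af i j ∧ Af i j ≤ UA i j) ∧
        ∀ Ae : Matrix (Fin n) (Fin n) ℝ,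
          (∀ i j, Ae i j = LE i j ∨ Ae i j = UE i j) →
          ∃ x : Fin n → ℝ, x ≠ 0 ∧ (Af + Ae).mulVec x = 0) :=
  not_aeRegular_iff_general LA UA LE UE hE
end

section
/- Let 𝐀 be an n×n interval matrix and define Ã ∈ 𝐀 by ã_{ii} = ā_{ii} (upper endpoint of diagonal entries) and, for i ≠ j, ã_{ij} the element of the interval 𝐚_{ij} of minimum absolute value. Then there exists an M-matrix A ∈ 𝐀 if and only if Ã is an M-matrix. -/
/-- `A` is an M-matrix: off-diagonal entries nonpositive and some `x > 0` with `Ax > 0`. -/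
def IsMMatrix {n : ℕ} (A : Matrix (Fin n) (Fin n) ℝ) : Prop :=
  (∀ i j, i ≠ j → A i j ≤ 0) ∧ ∃ x : Fin n → ℝ, (∀ i, 0 < x i) ∧ ∀ i, 0 < A.mulVec x i

/-- The element of the interval `[l,u]` of minimum absolute value. -/
noncomputable def minAbs (l u : ℝ) : ℝ :=
  if l ≤ 0 ∧ 0 ≤ u then 0 else if |l| ≤ |u| then l else u

lemma minAbs_mem {l u : ℝ} (h : l ≤ u) : l ≤ minAbs l u ∧ minAbs l u ≤ u := by
  unfold minAbs
  split_ifs with h1 h2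
  · exact ⟨h1.1, h1.2⟩
  · exact ⟨le_refl _, h⟩
  · exact ⟨h, le_refl _⟩

lemma le_minAbs {l u a : ℝ} (hl : l ≤ a) (hu : a ≤ u) (ha : a ≤ 0) :
    a ≤ minAbs l u ∧ minAbs l u ≤ 0 := by
  unfold minAbs
  split_ifs with h1 h2
  · exact ⟨ha, le_refl _⟩
  · push_neg at h1
    have hu0 : u < 0 := h1 (by linarith)
    rw [abs_of_nonpos (by linarith), abs_of_nonpos (by linarith)] at h2
    constructor <;> linarith
  · push_neg at h1
    have hu0 : u < 0 := h1 (by linarith)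
    exact ⟨hu, le_of_lt hu0⟩

/-- `𝐀 = [L,U]` contains an M-matrix iff `Ã` (upper diagonal endpoints,
minimum-modulus off-diagonal elements) is an M-matrix. -/
theorem weak_MMatrix_iff {n : ℕ} (L U : Matrix (Fin n) (Fin n) ℝ)
    (hLU : ∀ i j, L i j ≤ U i j) :
    (∃ A : Matrix (Fin n) (Fin n) ℝ,
        (∀ i j, L i j ≤ A i j ∧ A i j ≤ U i j) ∧ IsMMatrix A) ↔
    IsMMatrix (Matrix.of fun i j =>
        if i = j then U i i else minAbs (L i j) (U i j)) := by
  constructor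
  · rintro ⟨A, hA, hoff, x, hx, hAx⟩
    constructor
    · intro i j hij
      simp only [Matrix.of_apply, if_neg hij]
      exact (le_minAbs (hA i j).1 (hA i j).2 (hoff i j hij)).2
    · refine ⟨x, hx, fun i => ?_⟩
      have key : A.mulVec x i ≤
          (Matrix.of fun i j => if i = j then U i i else minAbs (L i j) (U i j)).mulVec x i := by
        unfold Matrix.mulVec dotProduct
        apply Finset.sum_le_sum
        intro j _
        apply mul_le_mul_of_nonneg_right _ (le_of_lt (hx j))
        simp only [Matrix.of_apply]
        by_cases hij : i = j
        · subst hij; simp [(hA i i).2]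
        · simp only [if_neg hij]
          exact (le_minAbs (hA i j).1 (hA i j).2 (hoff i j hij)).1
      exact lt_of_lt_of_le (hAx i) key
  · intro h
    refine ⟨_, fun i j => ?_, h⟩
    by_cases hij : i = j
    · subst hij; simp [hLU i i]
    · simp only [Matrix.of_apply, if_neg hij]
      exact minAbs_mem (hLU i j)
end

section
/- Let 𝐀 = 𝐀^∀ + 𝐀^∃ be a square interval matrix, and let Ã = A̲^∀ + Ã^∃ denote the matrix from the weak-M-matrix construction applied to the interval matrix A̲^∀ + 𝐀^∃ (upper diagonal endpoints, off-diagonal entries of minimum absolute value). Then 𝐀 is an AE M-matrix (for every A^∀ ∈ 𝐀^∀ there exists A^∃ ∈ 𝐀^∃ with A^∀ + A^∃ an M-matrix) if and only if Ã is an M-matrix and (Ā^∀ + Ã^∃)_{ij} ≤ 0 for all i ≠ j. -/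
lemma minAbs_self (a : ℝ) : minAbs a a = a := by
  unfold minAbs
  split_ifs with h1 h2
  · linarith [h1.1, h1.2]
  · rfl
  · rfl

lemma minAbs_of_nonpos {a b c : ℝ} (hc1 : a ≤ c) (hc2 : c ≤ b) (hc0 : c ≤ 0) :
    c ≤ minAbs a b ∧ minAbs a b ≤ 0 := by
  have ha : a ≤ 0 := hc1.trans hc0
  unfold minAbs
  rcases le_or_gt 0 b with hb | hb
  · rw [if_pos ⟨ha, hb⟩]; exact ⟨hc0, le_refl 0⟩
  · rw [if_neg (by rintro ⟨-, h2⟩; linarith)]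
    split_ifs with h2
    · have hab : a = b := by
        rw [abs_of_nonpos ha, abs_of_nonpos hb.le] at h2
        linarith [hc1.trans hc2]
      subst hab
      exact ⟨hc2, ha⟩
    · exact ⟨hc2, hb.le⟩

lemma mulVec_mono {n : ℕ} {A B : Matrix (Fin n) (Fin n) ℝ} {x : Fin n → ℝ}
    (hx : ∀ i, 0 ≤ x i) (hAB : ∀ i j, A i j ≤ B i j) (i : Fin n) :
    A.mulVec x i ≤ B.mulVec x i := by
  simp only [Matrix.mulVec, dotProduct]
  exact Finset.sum_le_sum fun j _ => mul_le_mul_of_nonneg_right (hAB i j) (hx j)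

/-- `𝐀 = 𝐀^∀ + 𝐀^∃` is an AE M-matrix iff `Ã = A̲^∀ + Ã^∃` (the weak-M-matrix
construction applied to `A̲^∀ + 𝐀^∃`) is an M-matrix and `(Ā^∀ + Ã^∃)_{ij} ≤ 0` for `i ≠ j`. -/
theorem aeMMatrix_iff {n : ℕ} (LA UA LE UE : Matrix (Fin n) (Fin n) ℝ)
    (hA : ∀ i j, LA i j ≤ UA i j) (hE : ∀ i j, LE i j ≤ UE i j)
    (hdisj : ∀ i j, (LA i j = 0 ∧ UA i j = 0) ∨ (LE i j = 0 ∧ UE i j = 0)) :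
    (∀ Af : Matrix (Fin n) (Fin n) ℝ,
        (∀ i j, LA i j ≤ Af i j ∧ Af i j ≤ UA i j) →
        ∃ Ae : Matrix (Fin n) (Fin n) ℝ,
          (∀ i j, LE i j ≤ Ae i j ∧ Ae i j ≤ UE i j) ∧ IsMMatrix (Af + Ae)) ↔
    (IsMMatrix (Matrix.of fun i j =>
        if i = j then LA i i + UE i i else minAbs (LA i j + LE i j) (LA i j + UE i j)) ∧
     ∀ i j, i ≠ j →
        UA i j + ((if i = j then LA i i + UE i i
            else minAbs (LA i j + LE i j) (LA i j + UE i j)) - LA i j) ≤ 0) := by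
  set T : Matrix (Fin n) (Fin n) ℝ := Matrix.of fun i j =>
      if i = j then LA i i + UE i i else minAbs (LA i j + LE i j) (LA i j + UE i j) with hTdef
  have hTij : ∀ i j, T i j =
      if i = j then LA i i + UE i i else minAbs (LA i j + LE i j) (LA i j + UE i j) := by
    intro i j; rfl
  constructor
  · intro hAE
    -- apply to Af = LA
    obtain ⟨Ae, hAe, hoff, x, hx, hBx⟩ := hAE LA (fun i j => ⟨le_refl _, hA i j⟩)
    -- key entrywise facts
    have key : ∀ i j, (LA + Ae) i j ≤ T i j ∧ (i ≠ j → T i j ≤ 0) := by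
      intro i j
      rcases eq_or_ne i j with rfl | hij
      · refine ⟨?_, fun h => absurd rfl h⟩
        rw [hTij, if_pos rfl]
        simp only [Matrix.add_apply]
        linarith [(hAe i i).2]
      · have hB0 : (LA + Ae) i j ≤ 0 := hoff i j hij
        have h1 : LA i j + LE i j ≤ (LA + Ae) i j := by
          simp only [Matrix.add_apply]; linarith [(hAe i j).1]
        have h2 : (LA + Ae) i j ≤ LA i j + UE i j := by
          simp only [Matrix.add_apply]; linarith [(hAe i j).2]
        have := minAbs_of_nonpos h1 h2 hB0
        rw [hTij, if_neg hij]
        exact ⟨this.1, fun _ => this.2⟩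
    have hTM : IsMMatrix T := by
      refine ⟨fun i j hij => (key i j).2 hij, x, hx, fun i => lt_of_lt_of_le (hBx i) ?_⟩
      exact mulVec_mono (fun i => (hx i).le) (fun i j => (key i j).1) i
    refine ⟨hTM, fun i j hij => ?_⟩
    rcases hdisj i j with ⟨hLA0, hUA0⟩ | ⟨hLE0, hUE0⟩
    · have h := (key i j).2 hij
      rw [hTij, if_neg hij] at h
      rw [if_neg hij]
      rw [hLA0] at h ⊢
      rw [hUA0]
      linarith
    · rw [if_neg hij, hLE0, hUE0, add_zero, minAbs_self]
      -- need UA i j ≤ 0; apply to Af = UA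
      obtain ⟨Ae', hAe', hoff', -⟩ := hAE UA (fun i j => ⟨hA i j, le_refl _⟩)
      have h0 : Ae' i j = 0 :=
        le_antisymm (by rw [← hUE0]; exact (hAe' i j).2) (by rw [← hLE0]; exact (hAe' i j).1)
      have := hoff' i j hij
      simp only [Matrix.add_apply, h0, add_zero] at this
      linarith
  · rintro ⟨⟨hToff, x, hx, hTx⟩, hcond⟩ Af hAf
    refine ⟨Matrix.of (fun i j => T i j - LA i j), fun i j => ?_, fun i j hij => ?_, x, hx,
      fun i => lt_of_lt_of_le (hTx i) (mulVec_mono (fun i => (hx i).le) (fun i j => ?_) i)⟩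
    · -- bounds on Ae
      rcases eq_or_ne i j with rfl | hij
      · rw [Matrix.of_apply, hTij, if_pos rfl]
        constructor <;> [linarith [hE i i]; linarith]
      · rw [Matrix.of_apply, hTij, if_neg hij]
        obtain ⟨hl, hu⟩ := minAbs_mem (show LA i j + LE i j ≤ LA i j + UE i j by
          linarith [hE i j])
        constructor <;> linarith
    · -- off-diagonal nonpositivity
      have := hcond i j hij
      rw [if_neg hij] at this
      have hT := hTij i j
      rw [if_neg hij] at hT
      simp only [Matrix.add_apply, Matrix.of_apply, hT]
      linarith [(hAf i j).2]
    · -- T ≤ Af + Ae entrywise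
      simp only [Matrix.add_apply, Matrix.of_apply]
      linarith [(hAf i j).1]
end

section
/- Let 𝐀 be an n×n interval matrix and define the real matrix Ã by ã_{ii} = mag(𝐚_{ii}) (the maximum of |a| over a ∈ 𝐚_{ii}) and ã_{ij} = −mig(𝐚_{ij}) (negative of the minimum of |a| over a ∈ 𝐚_{ij}) for i ≠ j. Then there exists an H-matrix A ∈ 𝐀 if and only if Ã is an M-matrix. -/
/-- The comparison matrix `⟨A⟩`. -/
def compMatrix {n : ℕ} (A : Matrix (Fin n) (Fin n) ℝ) : Matrix (Fin n) (Fin n) ℝ :=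
  Matrix.of fun i j => if i = j then |A i i| else -|A i j|

/-- `A` is an H-matrix if `⟨A⟩` is an M-matrix. -/
def IsHMatrix {n : ℕ} (A : Matrix (Fin n) (Fin n) ℝ) : Prop :=
  IsMMatrix (compMatrix A)

/-- Magnitude of the interval `[l,u]`. -/
noncomputable def mag (l u : ℝ) : ℝ := max |l| |u|

/-- Mignitude of the interval `[l,u]`. -/
noncomputable def mig (l u : ℝ) : ℝ := if l ≤ 0 ∧ 0 ≤ u then 0 else min |l| |u|

lemma mig_nonneg (l u : ℝ) : 0 ≤ mig l u := by
  unfold mig; split_ifs with h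
  · exact le_refl 0
  · exact le_min (abs_nonneg _) (abs_nonneg _)

lemma abs_le_mag (l u a : ℝ) (h1 : l ≤ a) (h2 : a ≤ u) : |a| ≤ mag l u := by
  unfold mag
  rw [abs_le]
  constructor
  · calc -(max |l| |u|) ≤ -|l| := neg_le_neg (le_max_left _ _)
      _ ≤ l := neg_abs_le _
      _ ≤ a := h1
  · calc a ≤ u := h2
      _ ≤ |u| := le_abs_self _
      _ ≤ max |l| |u| := le_max_right _ _

lemma mig_le_abs (l u a : ℝ) (h1 : l ≤ a) (h2 : a ≤ u) : mig l u ≤ |a| := by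
  unfold mig
  split_ifs with h
  · exact abs_nonneg _
  · rcases not_and_or.mp h with h | h
    · push_neg at h
      refine le_trans (min_le_left _ _) ?_
      rw [abs_of_pos h, abs_of_pos (lt_of_lt_of_le h h1)]
      exact h1
    · push_neg at h
      refine le_trans (min_le_right _ _) ?_
      rw [abs_of_neg h, abs_of_neg (lt_of_le_of_lt h2 h)]
      exact neg_le_neg h2

/-- `𝐀 = [L,U]` contains an H-matrix iff `Ã` with `ã_ii = mag(𝐚_ii)` and
`ã_ij = -mig(𝐚_ij)` for `i ≠ j` is an M-matrix. -/
theorem weak_HMatrix_iff {n : ℕ} (L U : Matrix (Fin n) (Fin n) ℝ)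
    (hLU : ∀ i j, L i j ≤ U i j) :
    (∃ A : Matrix (Fin n) (Fin n) ℝ,
        (∀ i j, L i j ≤ A i j ∧ A i j ≤ U i j) ∧ IsHMatrix A) ↔
    IsMMatrix (Matrix.of fun i j =>
        if i = j then mag (L i i) (U i i) else -mig (L i j) (U i j)) := by
  constructor
  · rintro ⟨A, hA, hoff, x, hx, hAx⟩
    refine ⟨fun i j hij => ?_, x, hx, fun i => ?_⟩
    · simp only [Matrix.of_apply, if_neg hij, neg_nonpos]
      exact mig_nonneg _ _
    · refine lt_of_lt_of_le (hAx i) ?_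
      unfold Matrix.mulVec dotProduct
      refine Finset.sum_le_sum fun j _ => ?_
      refine mul_le_mul_of_nonneg_right ?_ (hx j).le
      by_cases h : i = j
      · subst h
        simp only [compMatrix, Matrix.of_apply, if_pos rfl, eq_self_iff_true, if_true]
        exact abs_le_mag _ _ _ (hA i i).1 (hA i i).2
      · simp only [compMatrix, Matrix.of_apply, if_neg h, neg_le_neg_iff]
        exact mig_le_abs _ _ _ (hA i j).1 (hA i j).2
  · rintro h
    set A : Matrix (Fin n) (Fin n) ℝ := Matrix.of fun i j =>
      if i = j then (if |L i i| ≤ |U i i| then U i i else L i i)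
      else (if L i j ≤ 0 ∧ 0 ≤ U i j then 0 else
        if |L i j| ≤ |U i j| then L i j else U i j) with hAdef
    have hmem : ∀ i j, L i j ≤ A i j ∧ A i j ≤ U i j := by
      intro i j
      by_cases hij : i = j
      · subst hij
        simp only [hAdef, Matrix.of_apply, if_pos rfl, eq_self_iff_true, if_true]
        split_ifs with h1
        · exact ⟨hLU i i, le_refl _⟩
        · exact ⟨le_refl _, hLU i i⟩
      · simp only [hAdef, Matrix.of_apply, if_neg hij]
        split_ifs with h1 h2
        · exact ⟨h1.1, h1.2⟩
        · exact ⟨le_refl _, hLU i j⟩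
        · exact ⟨hLU i j, le_refl _⟩
    have hcomp : compMatrix A = Matrix.of fun i j =>
        if i = j then mag (L i i) (U i i) else -mig (L i j) (U i j) := by
      ext i j
      by_cases hij : i = j
      · subst hij
        simp only [compMatrix, Matrix.of_apply, hAdef, if_pos rfl, eq_self_iff_true, if_true, mag]
        split_ifs with h1
        · exact (max_eq_right h1).symm
        · exact (max_eq_left (le_of_not_ge h1)).symm
      · simp only [compMatrix, Matrix.of_apply, hAdef, if_neg hij, mig, neg_inj]
        split_ifs with h1 h2
        · exact abs_zero
        · exact (min_eq_left h2).symm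
        · exact (min_eq_right (le_of_not_ge h2)).symm
    exact ⟨A, hmem, by rw [IsHMatrix, hcomp]; exact h⟩
end

section
/- The 2×2 interval matrix 𝐀^{∀∃} with entries a₁₁ ∈ [0.8, 1] (existential), a₁₂ ∈ [−1, 0] (universal), a₂₁ = −1, a₂₂ = 1 has M-matrix midpoint and is AE regular, but it is not an AE H-matrix (there is no way to choose a₁₁ ∈ [0.8,1] making ⟨A⟩ an M-matrix uniformly for the worst case a₁₂ = −1). -/
/-- The interval matrix with `a₁₁ ∈ [0.8,1]` existential, `a₁₂ ∈ [-1,0]` universal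
and `a₂₁ = -1`, `a₂₂ = 1` has an M-matrix midpoint and is AE regular, but is not an AE H-matrix. -/
theorem midM_aeRegular_not_aeHMatrix :
    IsMMatrix (!![0.9, -0.5; -1, 1] : Matrix (Fin 2) (Fin 2) ℝ) ∧
    (∀ Af : Matrix (Fin 2) (Fin 2) ℝ,
        (∀ i j, (!![0,-1;-1,1] : Matrix (Fin 2) (Fin 2) ℝ) i j ≤ Af i j ∧
                 Af i j ≤ (!![0,0;-1,1] : Matrix (Fin 2) (Fin 2) ℝ) i j) →
        ∃ Ae : Matrix (Fin 2) (Fin 2) ℝ,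
          (∀ i j, (!![0.8,0;0,0] : Matrix (Fin 2) (Fin 2) ℝ) i j ≤ Ae i j ∧
                   Ae i j ≤ (!![1,0;0,0] : Matrix (Fin 2) (Fin 2) ℝ) i j) ∧
          (Af + Ae).det ≠ 0) ∧
    ¬ (∀ Af : Matrix (Fin 2) (Fin 2) ℝ,
        (∀ i j, (!![0,-1;-1,1] : Matrix (Fin 2) (Fin 2) ℝ) i j ≤ Af i j ∧
                 Af i j ≤ (!![0,0;-1,1] : Matrix (Fin 2) (Fin 2) ℝ) i j) →
        ∃ Ae : Matrix (Fin 2) (Fin 2) ℝ,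
          (∀ i j, (!![0.8,0;0,0] : Matrix (Fin 2) (Fin 2) ℝ) i j ≤ Ae i j ∧
                   Ae i j ≤ (!![1,0;0,0] : Matrix (Fin 2) (Fin 2) ℝ) i j) ∧
          IsHMatrix (Af + Ae)) := by
  refine ⟨?_, ?_, ?_⟩
  · constructor
    · intro i j hij
      fin_cases i <;> fin_cases j <;> simp_all <;> norm_num
    · refine ⟨![2, 3], ?_, ?_⟩
      · intro i; fin_cases i <;> norm_num
      · intro i; fin_cases i <;>
          simp [Matrix.mulVec, dotProduct, Fin.sum_univ_two] <;> norm_num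
  · intro Af hAf
    by_cases h : (-0.9 : ℝ) ≤ Af 0 1
    · refine ⟨!![1,0;0,0], ?_, ?_⟩
      · intro i j; fin_cases i <;> fin_cases j <;> norm_num
      · have h1 : Af 1 0 = -1 := le_antisymm (hAf 1 0).2 (by simpa using (hAf 1 0).1)
        have h2 : Af 1 1 = 1 := le_antisymm (by simpa using (hAf 1 1).2) (hAf 1 1).1
        have h0 : Af 0 0 = 0 := le_antisymm (by simpa using (hAf 0 0).2) (by simpa using (hAf 0 0).1)
        rw [Matrix.det_fin_two]
        simp [h0, h1, h2]
        nlinarith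
    · refine ⟨!![0.8,0;0,0], ?_, ?_⟩
      · intro i j; fin_cases i <;> fin_cases j <;> norm_num
      · have h1 : Af 1 0 = -1 := le_antisymm (hAf 1 0).2 (by simpa using (hAf 1 0).1)
        have h2 : Af 1 1 = 1 := le_antisymm (by simpa using (hAf 1 1).2) (hAf 1 1).1
        have h0 : Af 0 0 = 0 := le_antisymm (by simpa using (hAf 0 0).2) (by simpa using (hAf 0 0).1)
        rw [Matrix.det_fin_two]
        simp [h0, h1, h2]
        push_neg at h
        nlinarith
  · intro hcon
    obtain ⟨Ae, hAe, hH⟩ := hcon !![0,-1;-1,1] (by intro i j; fin_cases i <;> fin_cases j <;> norm_num)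
    have e01 : Ae 0 1 = 0 := le_antisymm (by simpa using (hAe 0 1).2) (by simpa using (hAe 0 1).1)
    have e10 : Ae 1 0 = 0 := le_antisymm (by simpa using (hAe 1 0).2) (by simpa using (hAe 1 0).1)
    have e11 : Ae 1 1 = 0 := le_antisymm (by simpa using (hAe 1 1).2) (by simpa using (hAe 1 1).1)
    have e00 : Ae 0 0 ≤ 1 := by simpa using (hAe 0 0).2
    obtain ⟨-, x, hx, hAx⟩ := hH
    have h0 := hAx 0
    have h1 := hAx 1
    simp [compMatrix, Matrix.mulVec, dotProduct, Fin.sum_univ_two, Matrix.add_apply,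
      e01, e10, e11] at h0 h1
    have ha : |(!![(0:ℝ),-1;-1,1]) 0 0 + Ae 0 0| ≤ 1 := by
      rw [abs_le]
      constructor
      · simp
        nlinarith [(hAe 0 0).1, hx 0, hx 1, show ((0.8:ℝ)) ≤ Ae 0 0 from by simpa using (hAe 0 0).1]
      · simpa using e00
    simp at ha
    nlinarith [hx 0, hx 1, abs_le.mp ha]
end

section
/- Let 𝐁 ∈ 𝕀ℝ^{n×k} and 𝐂 ∈ 𝕀ℝ^{n×(n−k)} with the radius of every entry of 𝐂 strictly positive. Then the square interval matrix (𝐁^∀ 𝐂^∃) (columns of 𝐁 universally quantified, columns of 𝐂 existentially quantified) is AE regular if and only if 𝐁 has strongly full column rank, i.e., every B ∈ 𝐁 has rank k. -/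
/-!
If `fromCols B C` is nonsingular, its columns are independent, so `B` has full column rank.
Conversely, a full-column-rank `B` is completed to a basis by some `C₁`. Along the line from any
`C₀` towards `C₁`, `t ↦ det (fromCols B (C₀ + t • (C₁ - C₀)))` is a polynomial that does not vanish
at `t = 1`, so it has non-roots arbitrarily close to `t = 0`. Hence the nonsingular completions
are dense and meet the open box `CL < C < CU`, which is nonempty because all radii are positive.
-/

open Filter Topology Polynomial Module

theorem Polynomial.frequently_eval_ne_zero {𝕜 : Type*} [NontriviallyNormedField 𝕜] {p : 𝕜[X]}
    (hp : p ≠ 0) (a : 𝕜) : ∃ᶠ t in 𝓝 a, p.eval t ≠ 0 := by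
  have hne : ∀ᶠ t in 𝓝[≠] a, p.eval t ≠ 0 := by
    filter_upwards [nhdsNE_of_nhdsNE_sdiff_finite Filter.univ_mem
      (finite_setOfPred_isRoot hp).to_subtype] with t ht
    simpa [hp] using ht.2
  exact hne.frequently.filter_mono nhdsWithin_le_nhds

namespace Matrix

theorem col_fromCols {R m n o : Type*} (B : Matrix m n R) (C : Matrix m o R) :
    (fromCols B C).col = Sum.elim B.col C.col := by
  ext (j | j) i <;> rfl

section Field

variable {K : Type*} [Field K] {n o : Type*} [Fintype n] [Fintype o]

theorem rank_eq_card_iff_linearIndependent_cols {m : Type*} [Fintype m] (A : Matrix m n K) :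
    A.rank = Fintype.card n ↔ LinearIndependent K A.col := by
  rw [linearIndependent_iff_card_eq_finrank_span, rank_eq_finrank_span_cols, Set.finrank, eq_comm]

variable [DecidableEq n] [DecidableEq o]

theorem rank_eq_card_of_det_fromCols_ne_zero {B : Matrix (n ⊕ o) n K} {C : Matrix (n ⊕ o) o K}
    (h : (fromCols B C).det ≠ 0) : B.rank = Fintype.card n := by
  have hcols := linearIndependent_cols_of_det_ne_zero h
  rw [col_fromCols] at hcols
  exact (rank_eq_card_iff_linearIndependent_cols B).2 (linearIndependent_sum.1 hcols).1

theorem exists_det_fromCols_ne_zero {B : Matrix (n ⊕ o) n K} (hB : B.rank = Fintype.card n) :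
    ∃ C : Matrix (n ⊕ o) o K, (fromCols B C).det ≠ 0 := by
  obtain ⟨q, hq⟩ := Submodule.exists_isCompl (Submodule.span K (Set.range B.col))
  have hq_finrank : finrank K q = Fintype.card o := by
    have := Submodule.finrank_add_eq_of_isCompl hq
    rw [← rank_eq_finrank_span_cols, hB, finrank_fintype_fun_eq_card, Fintype.card_sum] at this
    omega
  let b : Basis o K q := (finBasisOfFinrankEq K q hq_finrank).reindex (Fintype.equivFin o).symm
  refine ⟨of fun i j => (b j : n ⊕ o → K) i, ?_⟩
  have hcols : LinearIndependent K (fromCols B (of fun i j => (b j : n ⊕ o → K) i)).col := by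
    rw [col_fromCols]
    refine ((rank_eq_card_iff_linearIndependent_cols B).1 hB).sum_type
      (b.linearIndependent.map' q.subtype q.ker_subtype) (hq.disjoint.mono_right ?_)
    exact Submodule.span_le.2 (Set.range_subset_iff.2 fun j => (b j).2)
  exact ((isUnit_iff_isUnit_det _).1 (linearIndependent_cols_iff_isUnit.1 hcols)).ne_zero

end Field

section NormedField

variable {𝕜 : Type*} [NontriviallyNormedField 𝕜] {n o : Type*} [Fintype n] [Fintype o]
  [DecidableEq n] [DecidableEq o]

theorem frequently_det_add_smul_ne_zero {A E : Matrix n n 𝕜} (h : (A + E).det ≠ 0) :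
    ∃ᶠ t in 𝓝 (0 : 𝕜), (A + t • E).det ≠ 0 := by
  set p : 𝕜[X] := (A.map C + (X : 𝕜[X]) • E.map C).det
  have hp : ∀ t, p.eval t = (A + t • E).det := fun t => by
    rw [← coe_evalRingHom, RingHom.map_det]
    congr 1
    ext i j
    simp [mul_comm _ t]
  refine (frequently_eval_ne_zero (p := p) ?_ 0).mono fun t ht => hp t ▸ ht
  intro hp0
  exact h (by simpa [hp0] using (hp 1).symm)

theorem dense_setOf_det_fromCols_ne_zero {B : Matrix (n ⊕ o) n 𝕜}
    (h : ∃ C : Matrix (n ⊕ o) o 𝕜, (fromCols B C).det ≠ 0) :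
    Dense {C : Matrix (n ⊕ o) o 𝕜 | (fromCols B C).det ≠ 0} := by
  obtain ⟨C₁, hC₁⟩ := h
  intro C₀
  rw [mem_closure_iff_frequently]
  have hline : ∀ t : 𝕜,
      fromCols B C₀ + t • fromCols 0 (C₁ - C₀) = fromCols B (C₀ + t • (C₁ - C₀)) := by
    intro t
    ext i (j | j) <;> simp
  have hpath : Tendsto (fun t : 𝕜 => C₀ + t • (C₁ - C₀)) (𝓝 0) (𝓝 C₀) := by
    have hcont : Continuous fun t : 𝕜 => C₀ + t • (C₁ - C₀) := by fun_prop
    simpa using hcont.tendsto 0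
  have hfreq : ∃ᶠ t in 𝓝 (0 : 𝕜), (fromCols B (C₀ + t • (C₁ - C₀))).det ≠ 0 := by
    simp_rw [← hline]
    refine frequently_det_add_smul_ne_zero ?_
    rwa [← one_smul 𝕜 (fromCols 0 (C₁ - C₀)), hline, one_smul, add_sub_cancel]
  exact hpath.frequently hfreq

end NormedField

theorem isOpen_setOf_lt_lt {α m n : Type*} [TopologicalSpace α] [LinearOrder α]
    [OrderClosedTopology α] [Finite m] [Finite n] (L U : Matrix m n α) :
    IsOpen {A : Matrix m n α | ∀ i j, L i j < A i j ∧ A i j < U i j} := by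
  simp only [Set.ofPred_forall, Set.ofPred_and]
  exact isOpen_iInter_of_finite fun i => isOpen_iInter_of_finite fun j =>
    (isOpen_lt continuous_const (continuous_id.matrix_elem i j)).inter
      (isOpen_lt (continuous_id.matrix_elem i j) continuous_const)

end Matrix

theorem aeRegular_columns_iff_general {k m : ℕ}
    (BL BU : Matrix (Fin k ⊕ Fin m) (Fin k) ℝ)
    (CL CU : Matrix (Fin k ⊕ Fin m) (Fin m) ℝ)
    (hC : ∀ i j, CL i j < CU i j) :
    (∀ B : Matrix (Fin k ⊕ Fin m) (Fin k) ℝ,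
        (∀ i j, BL i j ≤ B i j ∧ B i j ≤ BU i j) →
        ∃ C : Matrix (Fin k ⊕ Fin m) (Fin m) ℝ,
          (∀ i j, CL i j ≤ C i j ∧ C i j ≤ CU i j) ∧
          (Matrix.fromCols B C).det ≠ 0) ↔
    (∀ B : Matrix (Fin k ⊕ Fin m) (Fin k) ℝ,
        (∀ i j, BL i j ≤ B i j ∧ B i j ≤ BU i j) → B.rank = k) := by
  refine ⟨fun h B hB => ?_, fun h B hB => ?_⟩
  · obtain ⟨C, -, hdet⟩ := h B hB
    simpa using Matrix.rank_eq_card_of_det_fromCols_ne_zero hdet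
  · have hdense := Matrix.dense_setOf_det_fromCols_ne_zero
      (Matrix.exists_det_fromCols_ne_zero (B := B) (by simpa using h B hB))
    have hmid : ∀ i j, CL i j < (CL i j + CU i j) / 2 ∧ (CL i j + CU i j) / 2 < CU i j :=
      fun i j => ⟨left_lt_add_div_two.2 (hC i j), add_div_two_lt_right.2 (hC i j)⟩
    obtain ⟨C, hdet, hCbox⟩ :=
      hdense.exists_mem_open (Matrix.isOpen_setOf_lt_lt CL CU) ⟨Matrix.of _, hmid⟩
    exact ⟨C, fun i j => ⟨(hCbox i j).1.le, (hCbox i j).2.le⟩, hdet⟩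

/-- With `𝐁 ∈ 𝕀ℝ^{n×k}` universal and `𝐂 ∈ 𝕀ℝ^{n×(n-k)}` existential with all
radii positive, `(𝐁^∀ 𝐂^∃)` is AE regular iff `𝐁` has strongly full column rank. -/
theorem aeRegular_columns_iff {k m : ℕ}
    (BL BU : Matrix (Fin k ⊕ Fin m) (Fin k) ℝ)
    (CL CU : Matrix (Fin k ⊕ Fin m) (Fin m) ℝ)
    (hB : ∀ i j, BL i j ≤ BU i j) (hC : ∀ i j, CL i j < CU i j) :
    (∀ B : Matrix (Fin k ⊕ Fin m) (Fin k) ℝ,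
        (∀ i j, BL i j ≤ B i j ∧ B i j ≤ BU i j) →
        ∃ C : Matrix (Fin k ⊕ Fin m) (Fin m) ℝ,
          (∀ i j, CL i j ≤ C i j ∧ C i j ≤ CU i j) ∧
          (Matrix.fromCols B C).det ≠ 0) ↔
    (∀ B : Matrix (Fin k ⊕ Fin m) (Fin k) ℝ,
        (∀ i j, BL i j ≤ B i j ∧ B i j ≤ BU i j) → B.rank = k) :=
  aeRegular_columns_iff_general BL BU CL CU hC
end

section
/- If there exists A^∃ ∈ 𝐀^∃ such that both A̲^∀ + A^∃ and Ā^∀ + A^∃ are inverse nonnegative, then for every A^∀ ∈ 𝐀^∀ the matrix A^∀ + A^∃ is inverse nonnegative; in particular 𝐀 = 𝐀^∀ + 𝐀^∃ is AE inverse nonnegative (with a single uniform existential choice). -/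
/-!
Kuttler's theorem reduces the statement to the interval `LA + Ae ≤ Af + Ae ≤ UA + Ae`, with the
single witness `Ae`. For `L ≤ A ≤ U` with `L⁻¹, U⁻¹ ≥ 0`, write `A = U (1 - P)` and
`L = U (1 - Q)` with `P = U⁻¹ (U - A)` and `Q = U⁻¹ (U - L)`, so that `0 ≤ P ≤ Q`. The partial
sums of `∑ Qᵏ` are `(1 - Q)⁻¹ (1 - Qᵐ) ≤ L⁻¹ U`, so the Neumann series of `Q`, and by comparison
that of `P`, converge; hence `(1 - P)⁻¹ = ∑ Pᵏ ≥ 0` and `A⁻¹ = (1 - P)⁻¹ U⁻¹ ≥ 0`.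
-/

/-- `A` is inverse nonnegative: invertible with entrywise nonnegative inverse. -/
def InvNonneg {n : ℕ} (A : Matrix (Fin n) (Fin n) ℝ) : Prop :=
  IsUnit A.det ∧ ∀ i j, 0 ≤ A⁻¹ i j

open Finset

namespace Matrix

theorem summable_iff_apply {X m n R : Type*} [AddCommMonoid R] [TopologicalSpace R]
    {f : X → Matrix m n R} : Summable f ↔ ∀ i j, Summable fun x => f x i j :=
  Pi.summable.trans <| forall_congr' fun _ => Pi.summable

theorem hasSum_apply {X m n R : Type*} [AddCommMonoid R] [TopologicalSpace R]
    {f : X → Matrix m n R} {a : Matrix m n R} (h : HasSum f a) (i : m) (j : n) :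
    HasSum (fun x => f x i j) (a i j) :=
  Pi.hasSum.mp (Pi.hasSum.mp h i) j

section OrderedSemiring

variable {ι R : Type*} [Fintype ι] [Semiring R] [PartialOrder R] [IsOrderedRing R]

theorem mul_apply_le_mul_apply_of_nonneg {M B C : Matrix ι ι R} (hM : ∀ i j, 0 ≤ M i j)
    (hBC : ∀ i j, B i j ≤ C i j) (i j : ι) : (M * B) i j ≤ (M * C) i j :=
  sum_le_sum fun k _ => mul_le_mul_of_nonneg_left (hBC k j) (hM i k)

theorem mul_apply_nonneg {A B : Matrix ι ι R} (hA : ∀ i j, 0 ≤ A i j)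
    (hB : ∀ i j, 0 ≤ B i j) (i j : ι) : 0 ≤ (A * B) i j :=
  sum_nonneg fun k _ => mul_nonneg (hA i k) (hB k j)

theorem pow_apply_le_pow_apply [DecidableEq ι] {P Q : Matrix ι ι R} (hP : ∀ i j, 0 ≤ P i j)
    (hPQ : ∀ i j, P i j ≤ Q i j) (k : ℕ) (i j : ι) : (P ^ k) i j ≤ (Q ^ k) i j := by
  induction k generalizing j with
  | zero => rfl
  | succ k ih =>
    rw [pow_succ, pow_succ, mul_apply, mul_apply]
    exact sum_le_sum fun l _ => mul_le_mul (ih l) (hPQ l j) (hP l j)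
      ((pow_apply_nonneg hP k i l).trans (ih l))

end OrderedSemiring

variable {ι : Type*} [Fintype ι] [DecidableEq ι]

theorem summable_pow_of_mul_one_sub_eq_one {Q N : Matrix ι ι ℝ} (hQ : ∀ i j, 0 ≤ Q i j)
    (hN : ∀ i j, 0 ≤ N i j) (hNQ : N * (1 - Q) = 1) : Summable (Q ^ ·) := by
  refine summable_iff_apply.mpr fun i j =>
    summable_of_sum_range_le (c := N i j) (fun k => pow_apply_nonneg hQ k i j) fun m => ?_
  have hgeom : ∑ k ∈ range m, Q ^ k = N - N * Q ^ m := by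
    calc ∑ k ∈ range m, Q ^ k = N * (1 - Q) * ∑ k ∈ range m, Q ^ k := by rw [hNQ, one_mul]
      _ = N - N * Q ^ m := by rw [mul_assoc, mul_neg_geom_sum, mul_sub, mul_one]
  have hentry := congrFun (congrFun hgeom i) j
  rw [sum_apply, sub_apply] at hentry
  linarith [mul_apply_nonneg hN (pow_apply_nonneg hQ m) i j]

theorem summable_pow_of_le {P Q : Matrix ι ι ℝ} (hP : ∀ i j, 0 ≤ P i j)
    (hPQ : ∀ i j, P i j ≤ Q i j) (hQ : Summable (Q ^ ·)) : Summable (P ^ ·) :=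
  summable_iff_apply.mpr fun i j => (summable_iff_apply.mp hQ i j).of_nonneg_of_le
    (fun k => pow_apply_nonneg hP k i j) fun k => pow_apply_le_pow_apply hP hPQ k i j

end Matrix

open Matrix

theorem InvNonneg.mul {n : ℕ} {A B : Matrix (Fin n) (Fin n) ℝ} (hA : InvNonneg A)
    (hB : InvNonneg B) : InvNonneg (A * B) := by
  refine ⟨by rw [det_mul]; exact hA.1.mul hB.1, ?_⟩
  rw [Matrix.mul_inv_rev]
  exact mul_apply_nonneg hB.2 hA.2

theorem invNonneg_one_sub_of_summable {n : ℕ} {P : Matrix (Fin n) (Fin n) ℝ}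
    (hP : ∀ i j, 0 ≤ P i j) (hsum : Summable (P ^ ·)) : InvNonneg (1 - P) := by
  have hright : (1 - P) * ∑' k, P ^ k = 1 := hsum.one_sub_mul_tsum_pow
  refine ⟨isUnit_det_of_right_inverse hright, fun i j => ?_⟩
  rw [inv_eq_right_inv hright]
  exact (hasSum_apply hsum.hasSum i j).nonneg fun k => pow_apply_nonneg hP k i j

theorem invNonneg_of_le_of_le {n : ℕ} {L A U : Matrix (Fin n) (Fin n) ℝ}
    (hLA : ∀ i j, L i j ≤ A i j) (hAU : ∀ i j, A i j ≤ U i j) (hL : InvNonneg L)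
    (hU : InvNonneg U) : InvNonneg A := by
  set P := U⁻¹ * (U - A)
  set Q := U⁻¹ * (U - L)
  have hA : A = U * (1 - P) := by
    rw [mul_sub, mul_one, mul_nonsing_inv_cancel_left _ _ hU.1, sub_sub_cancel]
  have hL_eq : L = U * (1 - Q) := by
    rw [mul_sub, mul_one, mul_nonsing_inv_cancel_left _ _ hU.1, sub_sub_cancel]
  have hLU : L⁻¹ * U * (1 - Q) = 1 := by
    rw [mul_assoc, ← hL_eq, nonsing_inv_mul _ hL.1]
  have hLU_nonneg : ∀ i j, 0 ≤ (L⁻¹ * U) i j := by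
    intro i j
    have hsplit : L⁻¹ * U = L⁻¹ * (U - L) + 1 := by
      rw [mul_sub, nonsing_inv_mul _ hL.1, sub_add_cancel]
    have hone : (0 : ℝ) ≤ (1 : Matrix (Fin n) (Fin n) ℝ) i j := by
      by_cases h : i = j <;> simp [one_apply, h]
    rw [hsplit, Matrix.add_apply]
    exact add_nonneg (mul_apply_nonneg hL.2 (fun k l => sub_nonneg.mpr
      ((hLA k l).trans (hAU k l))) i j) hone
  have hP : ∀ i j, 0 ≤ P i j :=
    mul_apply_nonneg hU.2 fun k l => sub_nonneg.mpr (hAU k l)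
  have hPQ : ∀ i j, P i j ≤ Q i j :=
    mul_apply_le_mul_apply_of_nonneg hU.2 fun k l => sub_le_sub_left (hLA k l) _
  have hQ : ∀ i j, 0 ≤ Q i j := fun i j => (hP i j).trans (hPQ i j)
  rw [hA]
  exact hU.mul (invNonneg_one_sub_of_summable hP
    (summable_pow_of_le hP hPQ (summable_pow_of_mul_one_sub_eq_one hQ hLU_nonneg hLU)))

/-- If some `A^∃ ∈ 𝐀^∃` makes both `A̲^∀ + A^∃` and `Ā^∀ + A^∃` inverse
nonnegative, then `A^∀ + A^∃` is inverse nonnegative for every `A^∀ ∈ 𝐀^∀`; in particular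
`𝐀` is AE inverse nonnegative with a single uniform existential choice. -/
theorem uniform_aeInvNonneg {n : ℕ} (LA UA LE UE : Matrix (Fin n) (Fin n) ℝ)
    (Ae : Matrix (Fin n) (Fin n) ℝ)
    (hAe : ∀ i j, LE i j ≤ Ae i j ∧ Ae i j ≤ UE i j)
    (hlo : InvNonneg (LA + Ae)) (hhi : InvNonneg (UA + Ae)) :
    (∀ Af : Matrix (Fin n) (Fin n) ℝ,
        (∀ i j, LA i j ≤ Af i j ∧ Af i j ≤ UA i j) → InvNonneg (Af + Ae)) ∧
    (∀ Af : Matrix (Fin n) (Fin n) ℝ,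
        (∀ i j, LA i j ≤ Af i j ∧ Af i j ≤ UA i j) →
        ∃ Ae' : Matrix (Fin n) (Fin n) ℝ,
          (∀ i j, LE i j ≤ Ae' i j ∧ Ae' i j ≤ UE i j) ∧ InvNonneg (Af + Ae')) := by
  have huniform : ∀ Af : Matrix (Fin n) (Fin n) ℝ,
      (∀ i j, LA i j ≤ Af i j ∧ Af i j ≤ UA i j) → InvNonneg (Af + Ae) := fun Af hAf =>
    invNonneg_of_le_of_le (fun i j => add_le_add_left (hAf i j).1 (Ae i j))
      (fun i j => add_le_add_left (hAf i j).2 (Ae i j)) hlo hhi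
  exact ⟨huniform, fun Af hAf => ⟨Ae, hAe, huniform Af hAf⟩⟩
end

section
/- AE regularity of the interval matrix 𝐀 = 𝐀^∀ + 𝐀^∃ does NOT imply boundedness of the AE solution set of 𝐀x = 𝐛 for 𝐛 = 𝐛^∀ + 𝐛^∃: for 𝐀^∀ = 0, 𝐀^∃ = ([−1,1]) (1×1) and 𝐛 = 0, the interval matrix is AE regular but the AE solution set {x ∈ ℝ : ∃a ∈ [−1,1], ax = 0} equals all of ℝ, which is unbounded. -/
/-- AE regularity does not imply boundedness of the AE solution set: for
`𝐀^∀ = 0`, `𝐀^∃ = ([-1,1])` (1×1) and `𝐛 = 0`, the interval matrix is AE regular, but the AE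
solution set is all of `ℝ`, which is unbounded. -/
theorem aeRegular_unbounded_solution_set :
    (∃ A : Matrix (Fin 1) (Fin 1) ℝ,
        (∀ i j, -1 ≤ A i j ∧ A i j ≤ 1) ∧ A.det ≠ 0) ∧
    {x : ℝ | ∃ a : ℝ, -1 ≤ a ∧ a ≤ 1 ∧ a * x = 0} = Set.univ ∧
    ¬ Bornology.IsBounded {x : ℝ | ∃ a : ℝ, -1 ≤ a ∧ a ≤ 1 ∧ a * x = 0} := by
  have hset : {x : ℝ | ∃ a : ℝ, -1 ≤ a ∧ a ≤ 1 ∧ a * x = 0} = Set.univ := by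
    ext x
    simp only [Set.mem_setOf_eq, Set.mem_univ, iff_true]
    exact ⟨0, by norm_num⟩
  refine ⟨⟨1, ?_, by simp⟩, hset, ?_⟩
  · intro i j
    fin_cases i <;> fin_cases j <;> norm_num [Matrix.one_apply]
  · rw [hset]
    exact fun h => (Metric.isBounded_iff.mp h).elim fun C hC => by
      have := hC (Set.mem_univ 0) (Set.mem_univ (C + 1))
      simp [Real.dist_eq, abs_of_nonneg] at this
      cases abs_le.mp this with
      | intro h1 h2 => linarith [abs_nonneg (C : ℝ)]
end
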